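/- Let U ∈ B(H, H^⊗n) and V ∈ B(H, H^⊗m) be isometries with recovery map sets R_U and R_V respectively (each satisfying the orthogonality relation W†Q†RW = δ_{Q,R}·1). Then the concatenated encoding W = V^⊗n ∘ U is an isometry, and the set R_W = {(⊗_j F_j)·(V^⊗n Q V^⊗n†-conjugated G) : F_j ∈ R_V, G ∈ R_U} satisfies the orthogonality relation W†R†ωW = δ_{R,ω}·1_H, i.e., W†((⊗_j F_j)(V^⊗n G V†^⊗n))†((⊗_j ξ_j)(V^⊗n γ V†^⊗n))W = (∏_j δ_{F_j,ξ_j})δ_{G,γ}·1_H. -/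
import Mathlib


open Matrix


def fam {n : ℕ} {α β : Type*} (A : Fin n → Matrix α β ℂ) :
    Matrix (Fin n → α) (Fin n → β) ℂ :=
  fun x y => ∏ j, A j (x j) (y j)

lemma fam_mul {n : ℕ} {α β γ : Type*} [Fintype β] [DecidableEq β]
    (A : Fin n → Matrix α β ℂ) (B : Fin n → Matrix β γ ℂ) :
    fam A * fam B = fam (fun j => A j * B j) := by
  ext x y
  simp only [Matrix.mul_apply, fam]
  rw [Finset.prod_univ_sum, Fintype.piFinset_univ]
  exact Finset.sum_congr rfl fun z _ => (Finset.prod_mul_distrib).symm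

lemma fam_conj {n : ℕ} {α β : Type*} (A : Fin n → Matrix α β ℂ) :
    (fam A)ᴴ = fam (fun j => (A j)ᴴ) := by
  ext x y
  simp [fam, Matrix.conjTranspose_apply, star_prod]

lemma fam_smul_one {n : ℕ} {α : Type*} [Fintype α] [DecidableEq α] (c : Fin n → ℂ) :
    fam (fun j => c j • (1 : Matrix α α ℂ)) = (∏ j, c j) • 1 := by
  ext x y
  simp only [fam, Matrix.smul_apply, Matrix.one_apply, smul_eq_mul, mul_ite, mul_one, mul_zero]
  by_cases h : x = y
  · simp [h]
  · rw [if_neg h]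
    obtain ⟨j, hj⟩ := Function.ne_iff.mp h
    exact Finset.prod_eq_zero (Finset.mem_univ j) (if_neg hj)

/-- The `n`-fold tensor power of a matrix, with function-indexed tensor factors. -/
def tpowN (n : ℕ) {α β : Type*} (V : Matrix α β ℂ) : Matrix (Fin n → α) (Fin n → β) ℂ :=
  fun x y => ∏ j, V (x j) (y j)

/-- The tensor product of a family of square matrices. -/
def tfam {n : ℕ} {α : Type*} (F : Fin n → Matrix α α ℂ) : Matrix (Fin n → α) (Fin n → α) ℂ :=
  fun x y => ∏ j, F j (x j) (y j)

/-- The concatenated encoding `W = V^⊗n U` is an isometry, and the concatenated recovery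
maps `(⊗_j F_j) · (V^⊗n G (V^⊗n)ᴴ)` satisfy the orthogonality relation
`Wᴴ Rᴴ ω W = (∏_j δ_{F_j, ξ_j}) δ_{G,γ} · 1`. -/
theorem stmt_17 {ι : Type*} [Fintype ι] [DecidableEq ι] (n m : ℕ)
    [DecidableEq (Matrix (Fin n → ι) (Fin n → ι) ℂ)]
    [DecidableEq (Matrix (Fin m → ι) (Fin m → ι) ℂ)]
    (U : Matrix (Fin n → ι) ι ℂ) (V : Matrix (Fin m → ι) ι ℂ)
    (hU : Uᴴ * U = 1) (hV : Vᴴ * V = 1)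
    (RU : Finset (Matrix (Fin n → ι) (Fin n → ι) ℂ))
    (RV : Finset (Matrix (Fin m → ι) (Fin m → ι) ℂ))
    (hRU : ∀ Q ∈ RU, ∀ R ∈ RU, Uᴴ * Qᴴ * R * U = if Q = R then 1 else 0)
    (hRV : ∀ F ∈ RV, ∀ ξ ∈ RV, Vᴴ * Fᴴ * ξ * V = if F = ξ then 1 else 0) :
    (tpowN n V * U)ᴴ * (tpowN n V * U) = 1 ∧
    ∀ (F ξ : Fin n → Matrix (Fin m → ι) (Fin m → ι) ℂ),
      (∀ j, F j ∈ RV) → (∀ j, ξ j ∈ RV) →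
      ∀ G ∈ RU, ∀ γ ∈ RU,
        (tpowN n V * U)ᴴ * (tfam F * (tpowN n V * G * (tpowN n V)ᴴ))ᴴ *
            (tfam ξ * (tpowN n V * γ * (tpowN n V)ᴴ)) * (tpowN n V * U) =
          ((∏ j, if F j = ξ j then (1 : ℂ) else 0) * (if G = γ then 1 else 0)) • 1 := by
  have hPfam : tpowN n V = fam (fun _ => V) := rfl
  have hP1 : (tpowN n V)ᴴ * tpowN n V = 1 := by
    rw [hPfam, fam_conj, fam_mul]
    simp only [hV]
    ext x y
    by_cases h : x = y
    · simp [fam, Matrix.one_apply, h]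
    · obtain ⟨j, hj⟩ := Function.ne_iff.mp h
      simp only [fam, Matrix.one_apply, if_neg h]
      exact Finset.prod_eq_zero (Finset.mem_univ j) (by simp [Matrix.one_apply, hj])
  constructor
  · rw [Matrix.conjTranspose_mul, Matrix.mul_assoc, ← Matrix.mul_assoc (tpowN n V)ᴴ, hP1,
      Matrix.one_mul, hU]
  · intro F ξ hF hξ G hG γ hγ
    have c1 : (tpowN n V)ᴴ * (tpowN n V * U) = U := by
      rw [← Matrix.mul_assoc, hP1, Matrix.one_mul]
    have c2 : (tpowN n V)ᴴ * (tpowN n V * (Gᴴ * (γ * U))) = Gᴴ * (γ * U) := by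
      rw [← Matrix.mul_assoc, hP1, Matrix.one_mul]
    set c : ℂ := ∏ j, if F j = ξ j then (1 : ℂ) else 0 with hc
    have core : (tpowN n V)ᴴ * ((tfam F)ᴴ * (tfam ξ * tpowN n V)) = c • 1 := by
      rw [hPfam, show tfam F = fam F from rfl, show tfam ξ = fam ξ from rfl, fam_conj,
        fam_conj, fam_mul, fam_mul, fam_mul]
      have hfac : (fun j => Vᴴ * ((F j)ᴴ * (ξ j * V))) =
          fun j => (if F j = ξ j then (1 : ℂ) else 0) • (1 : Matrix ι ι ℂ) := by
        funext j
        rw [← Matrix.mul_assoc, ← Matrix.mul_assoc, hRV _ (hF j) _ (hξ j)]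
        split_ifs <;> simp
      rw [hfac, fam_smul_one]
    have hMid : ∀ (Y : Matrix (Fin n → ι) ι ℂ),
        (tpowN n V)ᴴ * ((tfam F)ᴴ * (tfam ξ * (tpowN n V * Y))) = c • Y := by
      intro Y
      have : (tpowN n V)ᴴ * ((tfam F)ᴴ * (tfam ξ * (tpowN n V * Y))) =
          ((tpowN n V)ᴴ * ((tfam F)ᴴ * (tfam ξ * tpowN n V))) * Y := by
        simp only [Matrix.mul_assoc]
      rw [this, core, Matrix.smul_mul, Matrix.one_mul]
    have hGγ : Uᴴ * (Gᴴ * (γ * U)) = (if G = γ then (1 : ℂ) else 0) • 1 := by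
      have h := hRU G hG γ hγ
      simp only [Matrix.mul_assoc] at h
      rw [h]
      split_ifs <;> simp
    simp only [Matrix.conjTranspose_mul, Matrix.conjTranspose_conjTranspose, Matrix.mul_assoc]
    rw [c1, hMid (γ * U)]
    simp only [Matrix.mul_smul]
    rw [c2, hGγ, smul_smul]
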